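/- arXiv:2009.12810 — 5 statements merged into one kernel-verified Lean document; each statement's English description precedes it below -/
import Mathlib

section
/- Let μ be a positive Borel measure on ℝ that is a tempered distribution, whose distributional Fourier transform μ̂ is a measure satisfying ∫_{(-R,R)} d|μ̂| = O(R^m) as R → ∞ for some m > 0. Then there exists a constant C > 0 such that μ((a,b)) ≤ C(1 + b − a) for all real a < b. -/
open MeasureTheory Set
open scoped FourierTransform Real ENNReal SchwartzMap

/-!
Let `ψ_c` be a smooth bump equal to `1` on `[c, c + 1]`, and `φ_c = 𝓕⁻ ψ_c`. Testing the
Fourier identity against `φ_c` gives `μ [c, c + 1) ≤ ∫ ψ_c dμ = |∫ φ_c dμ̂| ≤ ∫ |φ_c| d|μ̂|`.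
Translating `ψ_c` only multiplies `φ_c` by a unimodular phase, so `|φ_c| = |φ_0|` and the bound is
uniform in `c`; covering `(a, b)` by `⌈b - a⌉` unit intervals gives the linear bound.
-/

theorem Real.norm_fourierInv_comp_add_right {V E : Type*} [NormedAddCommGroup V]
    [InnerProductSpace ℝ V] [FiniteDimensional ℝ V] [MeasurableSpace V] [BorelSpace V]
    [NormedAddCommGroup E] [NormedSpace ℂ E] (f : V → E) (v₀ w : V) :
    ‖𝓕⁻ (fun v ↦ f (v + v₀)) w‖ = ‖𝓕⁻ f w‖ := by
  change ‖VectorFourier.fourierIntegral 𝐞 volume (-innerₗ V) (f ∘ fun v ↦ v + v₀) w‖ = _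
  rw [VectorFourier.fourierIntegral_comp_add_right]
  exact Circle.norm_smul _ _

noncomputable def ContDiffBump.toSchwartzMap {E : Type*} [NormedAddCommGroup E] [NormedSpace ℝ E]
    [FiniteDimensional ℝ E] [HasContDiffBump E] {c : E} (f : ContDiffBump c) : 𝓢(E, ℂ) :=
  HasCompactSupport.toSchwartzMap (f := fun x ↦ (f x : ℂ))
    (f.hasCompactSupport.comp_left Complex.ofReal_zero)
    (Complex.ofRealCLM.contDiff.comp f.contDiff)

@[simp]
theorem ContDiffBump.toSchwartzMap_apply {E : Type*} [NormedAddCommGroup E] [NormedSpace ℝ E]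
    [FiniteDimensional ℝ E] [HasContDiffBump E] {c : E} (f : ContDiffBump c) (x : E) :
    f.toSchwartzMap x = f x :=
  rfl

theorem MeasureTheory.measure_le_ofReal_integral {α : Type*} [MeasurableSpace α] {μ : Measure α}
    {f : α → ℝ} {s : Set α} (hs : MeasurableSet s) (hf : Integrable f μ) (hf₀ : 0 ≤ f)
    (hf₁ : ∀ x ∈ s, 1 ≤ f x) : μ s ≤ ENNReal.ofReal (∫ x, f x ∂μ) := by
  rw [ofReal_integral_eq_lintegral_ofReal hf (.of_forall hf₀), ← lintegral_indicator_one hs]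
  refine lintegral_mono fun x ↦ ?_
  by_cases hx : x ∈ s
  · simpa [hx] using hf₁ x hx
  · simp [hx]

theorem MeasureTheory.measure_Ico_add_natCast_le {μ : Measure ℝ} {M : ℝ≥0∞}
    (h : ∀ c, μ (Ico c (c + 1)) ≤ M) (a : ℝ) (n : ℕ) : μ (Ico a (a + n)) ≤ n * M := by
  induction n with
  | zero => simp
  | succ n ih =>
    have hsplit : Ico a (a + ↑(n + 1)) = Ico a (a + n) ∪ Ico (a + n) (a + n + 1) := by
      rw [Ico_union_Ico_eq_Ico (by simp) (by simp)]
      push_cast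
      ring_nf
    calc μ (Ico a (a + ↑(n + 1))) ≤ μ (Ico a (a + n)) + μ (Ico (a + n) (a + n + 1)) :=
          hsplit ▸ measure_union_le _ _
      _ ≤ n * M + M := add_le_add ih (h _)
      _ = ↑(n + 1) * M := by push_cast; ring

theorem MeasureTheory.measure_Ioo_le_of_forall_measure_Ico_le {μ : Measure ℝ} {M : ℝ}
    (hM : 0 ≤ M) (h : ∀ c, μ (Ico c (c + 1)) ≤ ENNReal.ofReal M) {a b : ℝ} (hab : a ≤ b) :
    μ (Ioo a b) ≤ ENNReal.ofReal (M * (1 + b - a)) := by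
  set n := ⌈b - a⌉₊
  have hn : (n : ℝ) ≤ 1 + b - a := by
    have := Nat.ceil_lt_add_one (sub_nonneg.mpr hab); linarith
  have hcover : Ioo a b ⊆ Ico a (a + n) := fun x hx ↦
    ⟨hx.1.le, by linarith [hx.2, Nat.le_ceil (b - a)]⟩
  calc μ (Ioo a b) ≤ n * ENNReal.ofReal M :=
        (measure_mono hcover).trans (measure_Ico_add_natCast_le h a n)
    _ = ENNReal.ofReal (n * M) := by rw [ENNReal.ofReal_mul (by positivity), ENNReal.ofReal_natCast]
    _ ≤ ENNReal.ofReal (M * (1 + b - a)) :=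
        ENNReal.ofReal_le_ofReal (by rw [mul_comm]; exact mul_le_mul_of_nonneg_left hn hM)

def unitBump (c : ℝ) : ContDiffBump c := ⟨1, 2, one_pos, one_lt_two⟩

theorem unitBump_apply (c x : ℝ) : unitBump c x = unitBump 0 (x - c) := by
  simp [unitBump, ContDiffBump.apply]

theorem unitBump_eq_one_of_mem_Ico {c x : ℝ} (hx : x ∈ Ico c (c + 1)) : unitBump c x = 1 :=
  (unitBump c).one_of_mem_closedBall <| by
    change |x - c| ≤ 1
    rw [abs_le]
    exact ⟨by linarith [hx.1], by linarith [hx.2]⟩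

theorem measure_Ico_le_integral_norm_fourierInv_unitBump {μ ν : Measure ℝ} {g : ℝ → ℂ}
    (hg : ∀ t, ‖g t‖ = 1)
    (hμ : ∀ φ : 𝓢(ℝ, ℂ), Integrable (fun x ↦ φ x) μ)
    (hFT : ∀ φ : 𝓢(ℝ, ℂ), ∫ x, 𝓕 (fun y ↦ φ y) x ∂μ = ∫ t, φ t * g t ∂ν) (c : ℝ) :
    μ (Ico c (c + 1)) ≤ ENNReal.ofReal (∫ t, ‖𝓕⁻ (unitBump 0).toSchwartzMap t‖ ∂ν) := by
  set ψ := (unitBump c).toSchwartzMap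
  have hFψ : 𝓕 (⇑(𝓕⁻ ψ : 𝓢(ℝ, ℂ)) : ℝ → ℂ) = ⇑ψ := by
    rw [← SchwartzMap.fourier_coe, FourierInvPair.fourier_fourierInv_eq]
  have hidentity := hFT (𝓕⁻ ψ)
  simp only [hFψ, ψ, ContDiffBump.toSchwartzMap_apply, integral_complex_ofReal] at hidentity
  have hint : Integrable (fun x ↦ unitBump c x) μ := by simpa [ψ] using (hμ ψ).re
  have hmeasure : μ (Ico c (c + 1)) ≤ ENNReal.ofReal (∫ x, unitBump c x ∂μ) :=
    measure_le_ofReal_integral measurableSet_Ico hint (fun _ ↦ (unitBump c).nonneg)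
      fun _ hx ↦ (unitBump_eq_one_of_mem_Ico hx).ge
  have hshift : ⇑ψ = fun x ↦ (unitBump 0).toSchwartzMap (x + -c) := by
    funext x
    rw [ContDiffBump.toSchwartzMap_apply, ContDiffBump.toSchwartzMap_apply, unitBump_apply c,
      sub_eq_add_neg]
  have hnorm : ∀ t, ‖(𝓕⁻ ψ) t * g t‖ = ‖𝓕⁻ (unitBump 0).toSchwartzMap t‖ := fun t ↦ by
    rw [norm_mul, hg, mul_one, SchwartzMap.fourierInv_coe, SchwartzMap.fourierInv_coe, hshift]
    exact Real.norm_fourierInv_comp_add_right _ (-c) t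
  refine hmeasure.trans (ENNReal.ofReal_le_ofReal ?_)
  calc ∫ x, unitBump c x ∂μ = (∫ t, (𝓕⁻ ψ) t * g t ∂ν).re := by
        rw [← hidentity, Complex.ofReal_re]
    _ ≤ ‖∫ t, (𝓕⁻ ψ) t * g t ∂ν‖ := Complex.re_le_norm _
    _ ≤ ∫ t, ‖(𝓕⁻ ψ) t * g t‖ ∂ν := norm_integral_le_integral_norm _
    _ = _ := by simp_rw [hnorm]

/-- `μ̂` is encoded by its polar decomposition `dμ̂ = g dν`, with `ν = |μ̂|` and `|g| = 1`. -/
theorem stmt0_general (μ ν : Measure ℝ) (g : ℝ → ℂ)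
    (hg : ∀ t, ‖g t‖ = 1)
    (hμtemp : ∀ φ : SchwartzMap ℝ ℂ, Integrable (fun x => φ x) μ)
    (hFT : ∀ φ : SchwartzMap ℝ ℂ,
      ∫ x, 𝓕 (fun y => φ y) x ∂μ = ∫ t, φ t * g t ∂ν) :
    ∃ C > (0:ℝ), ∀ a b : ℝ, a < b →
      μ (Set.Ioo a b) ≤ ENNReal.ofReal (C * (1 + b - a)) := by
  set M := ∫ t, ‖𝓕⁻ (unitBump 0).toSchwartzMap t‖ ∂ν
  have hM : 0 ≤ M := integral_nonneg fun _ ↦ norm_nonneg _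
  refine ⟨M + 1, by positivity, fun a b hab ↦ ?_⟩
  refine measure_Ioo_le_of_forall_measure_Ico_le (by positivity) (fun c ↦ ?_) hab.le
  exact (measure_Ico_le_integral_norm_fourierInv_unitBump hg hμtemp hFT c).trans
    (ENNReal.ofReal_le_ofReal (by linarith))

/-- A positive tempered measure whose distributional Fourier
transform is a (complex) measure with polynomially growing total variation
satisfies `μ((a,b)) ≤ C (1 + b - a)`.  The complex measure `μ̂` is encoded via
its polar decomposition: total variation measure `ν` and a unimodular density
`g`, so that `⟨μ̂, φ⟩ = ∫ φ g dν`. -/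
theorem stmt0 (μ ν : Measure ℝ) (g : ℝ → ℂ)
    (hg : ∀ t, ‖g t‖ = 1)
    (hμtemp : ∀ φ : SchwartzMap ℝ ℂ, Integrable (fun x => φ x) μ)
    (hνtemp : ∀ φ : SchwartzMap ℝ ℂ, Integrable (fun t => φ t * g t) ν)
    (hFT : ∀ φ : SchwartzMap ℝ ℂ,
      ∫ x, 𝓕 (fun y => φ y) x ∂μ = ∫ t, φ t * g t ∂ν)
    (hgrowth : ∃ m > (0:ℝ), ∃ C : ℝ, ∀ R ≥ (1:ℝ),
      ν (Set.Ioo (-R) R) ≤ ENNReal.ofReal (C * R ^ m)) :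
    ∃ C > (0:ℝ), ∀ a b : ℝ, a < b →
      μ (Set.Ioo a b) ≤ ENNReal.ofReal (C * (1 + b - a)) :=
  stmt0_general μ ν g hg hμtemp hFT
end

section
/- Let p be an entire function of exponential type that is bounded on the half-plane {Im w ≥ 1}. Then p is bounded on every horizontal strip {|Im w| ≤ r}, and there exist C, σ > 0 such that |p(x + iy)| ≤ C e^{−σy} for all x ∈ ℝ and y ≤ 0. -/
/-!
Multiplying `p` by `exp (-σ i (w - i))` produces a function of exponential type that is bounded
by `M` on the line `Im w = 1` and stays bounded along the imaginary ray going down from it.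
Phragmén–Lindelöf in the half-plane `Im w ≤ 1` bounds it by `M` there, that is
`‖p w‖ ≤ M e^{σ (1 - Im w)}`, which gives both conclusions.
-/

open Complex Set Filter Asymptotics Bornology

variable {E : Type*} [NormedAddCommGroup E] [NormedSpace ℂ E] {f : ℂ → E}

theorem PhragmenLindelof.lower_half_plane_of_bounded_on_neg_imaginary {C : ℝ}
    (hd : DiffContOnCl ℂ f {z | z.im < 0})
    (hexp : ∃ c < (2 : ℝ), ∃ B,
      f =O[cobounded ℂ ⊓ 𝓟 {z | z.im < 0}] fun z => Real.exp (B * ‖z‖ ^ c))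
    (him : IsBoundedUnder (· ≤ ·) atTop fun t : ℝ => ‖f (-I * t)‖)
    (hre : ∀ x : ℝ, ‖f x‖ ≤ C) {z : ℂ} (hz : z.im ≤ 0) : ‖f z‖ ≤ C := by
  obtain ⟨c, hc, B, hO⟩ := hexp
  have hrot : MapsTo (-I * ·) {ζ : ℂ | 0 < ζ.re} {z | z.im < 0} := fun ζ hζ => by
    simpa using hζ
  have hrot_lim : Tendsto (-I * ·) (cobounded ℂ ⊓ 𝓟 {ζ | 0 < ζ.re})
      (cobounded ℂ ⊓ 𝓟 {z | z.im < 0}) :=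
    (tendsto_mul_left_cobounded (neg_ne_zero.2 I_ne_zero)).inf (tendsto_principal_principal.2 hrot)
  have key : ‖f (-I * (I * z))‖ ≤ C :=
    PhragmenLindelof.right_half_plane_of_bounded_on_real (f := fun ζ => f (-I * ζ))
      (hd.comp (differentiable_id.const_mul _).diffContOnCl hrot)
      ⟨c, hc, B, by simpa [Function.comp_def] using hO.comp_tendsto hrot_lim⟩ him
      (fun x => by simpa [mul_comm _ I, ← mul_assoc] using hre x) (by simpa using hz)
  simpa [← mul_assoc] using key

theorem norm_le_mul_exp_neg_im_of_bounded_on_real (hf : Differentiable ℂ f) {A σ M : ℝ}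
    (hσ : 0 ≤ σ) (htype : ∀ z, ‖f z‖ ≤ A * Real.exp (σ * ‖z‖)) (hre : ∀ x : ℝ, ‖f x‖ ≤ M)
    {z : ℂ} (hz : z.im ≤ 0) : ‖f z‖ ≤ M * Real.exp (-σ * z.im) := by
  set g : ℂ → E := fun z => exp (-σ * I * z) • f z
  have hg_norm (z : ℂ) : ‖g z‖ = Real.exp (σ * z.im) * ‖f z‖ := by
    simp [g, norm_smul, norm_exp]
  have hg_exp : g =O[cobounded ℂ ⊓ 𝓟 {z | z.im < 0}] fun z => Real.exp (σ * ‖z‖ ^ (1 : ℝ)) := by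
    refine IsBigO.of_bound A <|
      (eventually_principal.2 fun (z : ℂ) (hz : z.im < 0) => ?_).filter_mono inf_le_right
    rw [hg_norm, Real.rpow_one, Real.norm_of_nonneg (Real.exp_pos _).le]
    refine (mul_le_of_le_one_left (norm_nonneg _) ?_).trans (htype z)
    exact Real.exp_le_one_iff.2 (mul_nonpos_of_nonneg_of_nonpos hσ hz.le)
  have hg_im : ∀ᶠ t : ℝ in atTop, ‖g (-I * t)‖ ≤ A := by
    filter_upwards [eventually_ge_atTop 0] with t ht
    calc ‖g (-I * t)‖ = Real.exp (-(σ * t)) * ‖f (-I * t)‖ := by simp [hg_norm]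
      _ ≤ Real.exp (-(σ * t)) * (A * Real.exp (σ * t)) := by
        gcongr; simpa [abs_of_nonneg ht] using htype (-I * t)
      _ = A := by rw [mul_left_comm, ← Real.exp_add, neg_add_cancel, Real.exp_zero, mul_one]
  have hg_re (x : ℝ) : ‖g x‖ ≤ M := by simpa [hg_norm] using hre x
  have hg : Real.exp (σ * z.im) * ‖f z‖ ≤ M := hg_norm z ▸
    PhragmenLindelof.lower_half_plane_of_bounded_on_neg_imaginary
      (Differentiable.diffContOnCl (by fun_prop)) ⟨1, one_lt_two, σ, hg_exp⟩
      (isBoundedUnder_of_eventually_le hg_im) hg_re hz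
  calc ‖f z‖ = Real.exp (-σ * z.im) * (Real.exp (σ * z.im) * ‖f z‖) := by
        rw [← mul_assoc, ← Real.exp_add, neg_mul, neg_add_cancel, Real.exp_zero, one_mul]
    _ ≤ M * Real.exp (-σ * z.im) := by rw [mul_comm]; gcongr

theorem norm_le_mul_exp_of_bounded_on_horizontal_line (hf : Differentiable ℂ f) {A σ M a : ℝ}
    (hσ : 0 ≤ σ) (htype : ∀ z, ‖f z‖ ≤ A * Real.exp (σ * ‖z‖))
    (hline : ∀ x : ℝ, ‖f (x + a * I)‖ ≤ M) {w : ℂ} (hw : w.im ≤ a) :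
    ‖f w‖ ≤ M * Real.exp (σ * (a - w.im)) := by
  have hA : 0 ≤ A := nonneg_of_mul_nonneg_left ((norm_nonneg _).trans (htype 0)) (Real.exp_pos _)
  have htype' (z : ℂ) : ‖f (z + a * I)‖ ≤ A * Real.exp (σ * |a|) * Real.exp (σ * ‖z‖) := by
    refine (htype _).trans ?_
    rw [mul_assoc, ← Real.exp_add, ← mul_add]
    gcongr
    simpa [add_comm] using norm_add_le z (a * I)
  have := norm_le_mul_exp_neg_im_of_bounded_on_real (hf.comp (by fun_prop)) hσ htype' hline
    (z := w - a * I) (by simpa using hw)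
  simpa [neg_mul_eq_mul_neg, neg_sub] using this

/-- an entire function of exponential type bounded on
`{Im w ≥ 1}` is bounded on every horizontal strip and satisfies
`|p(x+iy)| ≤ C e^{-σ y}` for `y ≤ 0`. -/
theorem stmt12 (p : ℂ → ℂ) (hp : Differentiable ℂ p)
    (htype : ∃ C > (0:ℝ), ∃ σ > (0:ℝ), ∀ w : ℂ,
      ‖p w‖ ≤ C * Real.exp (σ * ‖w‖))
    (hupper : ∃ M : ℝ, ∀ w : ℂ, 1 ≤ w.im → ‖p w‖ ≤ M) :
    (∀ r > (0:ℝ), ∃ M : ℝ, ∀ w : ℂ, |w.im| ≤ r → ‖p w‖ ≤ M) ∧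
    ∃ C > (0:ℝ), ∃ σ > (0:ℝ), ∀ x y : ℝ, y ≤ 0 →
      ‖p (x + y * Complex.I)‖ ≤ C * Real.exp (-σ * y) := by
  obtain ⟨C, -, σ, hσ, htype⟩ := htype
  obtain ⟨M, hM⟩ := hupper
  have hM0 : 0 ≤ M := (norm_nonneg _).trans (hM I (by simp))
  have hlower (w : ℂ) (hw : w.im ≤ 1) : ‖p w‖ ≤ M * Real.exp (σ * (1 - w.im)) :=
    norm_le_mul_exp_of_bounded_on_horizontal_line hp hσ.le htype
      (fun x => hM _ (by simp)) hw
  refine ⟨fun r hr => ⟨M * Real.exp (σ * (1 + r)), fun w hw => ?_⟩,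
    (M + 1) * Real.exp σ, by positivity, σ, hσ, fun x y hy => ?_⟩
  · rcases le_total w.im 1 with h | h
    · exact (hlower w h).trans (by gcongr; linarith [(abs_le.1 hw).1])
    · exact (hM w h).trans (le_mul_of_one_le_right hM0 (Real.one_le_exp (by positivity)))
  · calc ‖p (x + y * I)‖ ≤ M * Real.exp (σ * (1 - y)) := by
          simpa using hlower (x + y * I) (by simp; linarith)
      _ = M * Real.exp σ * Real.exp (-σ * y) := by
          rw [mul_assoc, ← Real.exp_add]; ring_nf
      _ ≤ (M + 1) * Real.exp σ * Real.exp (-σ * y) := by gcongr; linarith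
end

section
/- Let a_s ∈ ℂ for s in a locally finite set S₋ ⊂ (−∞, s₁] with s₁ < 0, with ∑_{s ∈ S₋, s > −R} |a_s| = O(R^m) for some m > 0. Then for every w with Im w > 0, the function exp(∑_{s∈S₋} (a_s/s) e^{−2πisw}) admits an absolutely convergent expansion ∑_{u∈U} b_u e^{−2πiuw}, where U is the set of all finite sums of elements of S₋ (including 0) and b_u ∈ ℂ. -/
/-!
Multiplying out the powers in `exp (∑ c s) = ∑ₙ (∑ c s)ⁿ / n!` writes the left-hand side as an
absolutely convergent sum over tuples `(s₁, …, sₙ)` of `(∏ c sᵢ) / n!`. For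
`c s = (a s / s) e^{-2πisw}` the factor `e^{-2πi(s₁ + ⋯ + sₙ)w}` depends on a tuple only through
its sum `u ∈ U`, so grouping the tuples by their sum yields coefficients `b u` free of `w`.
Absolute convergence of `∑ c s` comes from grouping the `s` by `⌊-s⌋ = n`: the polynomial growth
of the partial sums of `|a s|` is beaten by the factor `e^{-2π (Im w) n}`.
-/

open Set Complex
open scoped Real Nat

section PiPower

variable {ι R : Type*} [NormedCommRing R] {c : ι → R}

theorem summable_norm_prod_fin_pi (hc : Summable (‖c ·‖)) :
    ∀ n : ℕ, Summable fun v : Fin n → ι => ‖∏ i, c (v i)‖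
  | 0 => .of_finite
  | n + 1 => by
    refine ((Fin.consEquiv fun _ => ι).symm.summable_iff.2
      (hc.mul_norm (summable_norm_prod_fin_pi hc n))).congr fun v => ?_
    simp [Fin.consEquiv, Fin.prod_univ_succ, Fin.tail]

theorem tsum_prod_fin_pi [CompleteSpace R] (hc : Summable (‖c ·‖)) :
    ∀ n : ℕ, ∑' v : Fin n → ι, ∏ i, c (v i) = (∑' i, c i) ^ n
  | 0 => by simp
  | n + 1 => by
    rw [pow_succ', ← tsum_prod_fin_pi hc n,
      tsum_mul_tsum_of_summable_norm hc (summable_norm_prod_fin_pi hc n),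
      ← (Fin.consEquiv fun _ => ι).symm.tsum_eq]
    simp [Fin.consEquiv, Fin.prod_univ_succ, Fin.tail]

end PiPower

noncomputable def expSeriesTerm {ι : Type*} (c : ι → ℂ) (x : (n : ℕ) × (Fin n → ι)) : ℂ :=
  (∏ i, c (x.2 i)) / x.1 !

theorem summable_norm_expSeriesTerm {ι : Type*} {c : ι → ℂ} (hc : Summable (‖c ·‖)) :
    Summable fun x => ‖expSeriesTerm c x‖ := by
  have hnorm (x : (n : ℕ) × (Fin n → ι)) :
      ‖expSeriesTerm c x‖ = (∏ i, ‖c (x.2 i)‖) / x.1 ! := by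
    simp [expSeriesTerm, norm_prod]
  simp_rw [hnorm]
  refine (summable_sigma_of_nonneg fun x => by positivity).2 ⟨fun n => ?_, ?_⟩
  · simpa [norm_prod] using (summable_norm_prod_fin_pi hc n).div_const (n ! : ℝ)
  · simp_rw [tsum_div_const, tsum_prod_fin_pi (c := (‖c ·‖)) (by simpa using hc)]
    exact Real.summable_pow_div_factorial _

theorem hasSum_expSeriesTerm {ι : Type*} {c : ι → ℂ} (hc : Summable (‖c ·‖)) :
    HasSum (expSeriesTerm c) (exp (∑' i, c i)) := by
  have hsum := (summable_norm_expSeriesTerm hc).of_norm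
  have hseries : HasSum (fun n => ∑' v, expSeriesTerm c ⟨n, v⟩) (exp (∑' i, c i)) := by
    simp_rw [expSeriesTerm, tsum_div_const, tsum_prod_fin_pi hc, Complex.exp_eq_exp_ℂ]
    exact NormedSpace.expSeries_div_hasSum_exp _
  rw [← (hsum.hasSum.sigma fun n => (hsum.sigma_factor n).hasSum).unique hseries]
  exact hsum.hasSum

theorem hasSum_tsum_fiber_mul {α β 𝕜 : Type*} [NormedField 𝕜] [CompleteSpace 𝕜]
    {f : α → 𝕜} {g : β → 𝕜} (key : α → β) (h : Summable fun x => ‖f x * g (key x)‖) :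
    Summable (fun y => ‖(∑' x : key ⁻¹' {y}, f x) * g y‖) ∧
      HasSum (fun y => (∑' x : key ⁻¹' {y}, f x) * g y) (∑' x, f x * g (key x)) := by
  have hfiber (y : β) :
      ∑' x : key ⁻¹' {y}, f x * g (key x) = (∑' x : key ⁻¹' {y}, f x) * g y := by
    rw [← tsum_mul_right]
    exact tsum_congr fun x => by rw [x.2]
  refine ⟨?_, by simpa only [hfiber] using h.of_norm.hasSum.tsum_fiberwise key⟩
  refine (h.hasSum.tsum_fiberwise key).summable.of_nonneg_of_le (fun _ => norm_nonneg _)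
    fun y => ?_
  rw [← hfiber]
  exact norm_tsum_le_tsum_norm (h.subtype _)

theorem summable_rpow_mul_exp_neg_nat_mul (m : ℝ) {t : ℝ} (ht : 0 < t) :
    Summable fun n : ℕ => (n : ℝ) ^ m * Real.exp (-t * n) := by
  have hlim := (tendsto_rpow_mul_exp_neg_mul_atTop_nhds_zero m (t / 2) (by positivity)).comp
    tendsto_natCast_atTop_atTop
  refine Summable.of_norm_bounded_eventually_nat
    (Real.summable_exp_nat_mul_iff.2 (by linarith : -(t / 2) < 0)) ?_
  filter_upwards [hlim.eventually (ge_mem_nhds zero_lt_one)] with n hn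
  have hsplit : Real.exp (-t * n) = Real.exp (-(t / 2) * n) * Real.exp (n * -(t / 2)) := by
    rw [← Real.exp_add]; ring_nf
  rw [Real.norm_of_nonneg (by positivity), hsplit, ← mul_assoc]
  exact mul_le_of_le_one_left (by positivity) hn

theorem summable_norm_mul_exp_of_sum_norm_le_rpow {E : Type*} [SeminormedAddCommGroup E]
    {S : Set ℝ} (hS : S ⊆ Iic 0) (hfin : ∀ c d : ℝ, (S ∩ Icc c d).Finite) {a : ℝ → E}
    {C m t : ℝ} (hg : ∀ R ≥ (1 : ℝ), ∑ s ∈ (hfin (-R) 0).toFinset, ‖a s‖ ≤ C * R ^ m)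
    (ht : 0 < t) :
    Summable fun s : S => ‖a s‖ * Real.exp (t * s) := by
  let P (n : ℕ) : Set S := {s | ⌊-(s : ℝ)⌋₊ = n}
  have hP (s : S) : ∃! n, s ∈ P n := ⟨_, rfl, fun _ h => h.symm⟩
  -- On `P n`, `e^{ts} ≤ e^{-tn} = e^t e^{-t(n+1)}`; the growth bound is used at `R = n + 1`.
  have hsum_fiber (n : ℕ) (u : Finset (P n)) : ∑ s ∈ u, ‖a s‖ * Real.exp (t * s) ≤
      C * Real.exp t * (((n + 1 : ℕ) : ℝ) ^ m * Real.exp (-t * (n + 1 : ℕ))) := by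
    have hmem (s : P n) : -((n : ℝ) + 1) ≤ s ∧ (s : ℝ) ≤ -n := by
      have h0 : 0 ≤ -(s : ℝ) := neg_nonneg.2 (hS s.1.2)
      have hfl : ⌊-(s : ℝ)⌋₊ = n := s.2
      exact ⟨by linarith [hfl ▸ Nat.lt_floor_add_one (-(s : ℝ))],
        by linarith [hfl ▸ Nat.floor_le h0]⟩
    let emb : P n ↪ ℝ := (Function.Embedding.subtype _).trans (Function.Embedding.subtype _)
    have hsub : u.map emb ⊆ (hfin (-((n : ℝ) + 1)) 0).toFinset := by
      simp only [Finset.subset_iff, Finset.mem_map, Finite.mem_toFinset]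
      rintro _ ⟨s, -, rfl⟩
      exact ⟨s.1.2, (hmem s).1, (hmem s).2.trans (by simp)⟩
    calc ∑ s ∈ u, ‖a s‖ * Real.exp (t * s)
        ≤ ∑ s ∈ u, ‖a s‖ * Real.exp (-t * n) := by
          refine Finset.sum_le_sum fun s _ =>
            mul_le_mul_of_nonneg_left (Real.exp_le_exp.2 ?_) (norm_nonneg _)
          nlinarith [(hmem s).2]
      _ = (∑ x ∈ u.map emb, ‖a x‖) * Real.exp (-t * n) := by
          rw [Finset.sum_map, Finset.sum_mul]; rfl
      _ ≤ C * ((n : ℝ) + 1) ^ m * Real.exp (-t * n) := by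
          gcongr
          exact (Finset.sum_le_sum_of_subset_of_nonneg hsub fun _ _ _ => norm_nonneg _).trans
            (hg _ (by simp))
      _ = _ := by
          push_cast
          rw [mul_assoc, mul_assoc, mul_left_comm (Real.exp t), ← Real.exp_add]
          ring_nf
  have hmajorant :=
    ((summable_nat_add_iff 1).2 (summable_rpow_mul_exp_neg_nat_mul m ht)).mul_left (C * Real.exp t)
  refine (summable_partition (fun _ => by positivity) hP).2
    ⟨fun n => summable_of_sum_le (fun _ => by positivity) (hsum_fiber n), ?_⟩
  exact hmajorant.of_nonneg_of_le (fun _ => tsum_nonneg fun _ => by positivity)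
    fun n => Real.tsum_le_of_sum_le (fun _ => by positivity) (hsum_fiber n)

theorem norm_exp_neg_two_pi_I_mul (u : ℝ) (w : ℂ) :
    ‖exp (-(2 * π * I * u * w))‖ = Real.exp (2 * π * w.im * u) := by
  rw [Complex.norm_exp]
  congr 1
  simp only [neg_re, mul_re, mul_im, ofReal_re, ofReal_im, I_re, I_im, re_ofNat, im_ofNat]
  ring

theorem summable_norm_div_mul_exp {S : Set ℝ} {s₁ : ℝ} (hs₁ : s₁ < 0) (hS : S ⊆ Iic s₁)
    (hfin : ∀ c d : ℝ, (S ∩ Icc c d).Finite) {a : ℝ → ℂ} {C m : ℝ}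
    (hg : ∀ R ≥ (1 : ℝ), ∑ s ∈ (hfin (-R) 0).toFinset, ‖a s‖ ≤ C * R ^ m) {w : ℂ}
    (hw : 0 < w.im) :
    Summable fun s : S => ‖a s / (s : ℝ) * exp (-(2 * π * I * (s : ℝ) * w))‖ := by
  refine ((summable_norm_mul_exp_of_sum_norm_le_rpow (hS.trans (Iic_subset_Iic.2 hs₁.le)) hfin hg
    (by positivity : 0 < 2 * π * w.im)).mul_left (-s₁)⁻¹).of_nonneg_of_le
    (fun _ => norm_nonneg _) fun s => ?_
  have hs : (s : ℝ) ≤ s₁ := hS s.2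
  rw [norm_mul, norm_exp_neg_two_pi_I_mul, norm_div, Complex.norm_real,
    Real.norm_of_nonpos (by linarith), div_eq_mul_inv, mul_comm ‖a s‖, mul_assoc]
  gcongr
  linarith

theorem expSeriesTerm_mul_exp {ι : Type*} (c f : ι → ℂ) (x : (n : ℕ) × (Fin n → ι)) :
    expSeriesTerm (fun i => c i * exp (f i)) x = expSeriesTerm c x * exp (∑ j, f (x.2 j)) := by
  simp only [expSeriesTerm, Finset.prod_mul_distrib, Complex.exp_sum]
  ring

def finiteSums (S : Set ℝ) : Set ℝ := {u | ∃ l : List ℝ, (∀ s ∈ l, s ∈ S) ∧ l.sum = u}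

def tupleSum {S : Set ℝ} (x : (n : ℕ) × (Fin n → S)) : ℝ := ∑ i, (x.2 i : ℝ)

theorem tupleSum_mem_finiteSums {S : Set ℝ} (x : (n : ℕ) × (Fin n → S)) :
    tupleSum x ∈ finiteSums S :=
  ⟨List.ofFn fun i => (x.2 i : ℝ), by simp, List.sum_ofFn⟩

theorem support_tsum_fiber_tupleSum_subset {S : Set ℝ} {M : Type*} [AddCommMonoid M]
    [TopologicalSpace M] (f : (n : ℕ) × (Fin n → S) → M) :
    Function.support (fun u => ∑' x : tupleSum ⁻¹' {u}, f x.1) ⊆ finiteSums S := by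
  intro u hu
  by_contra hnot
  have : IsEmpty (tupleSum ⁻¹' {u}) := ⟨fun x => hnot (x.2 ▸ tupleSum_mem_finiteSums x.1)⟩
  exact hu tsum_empty

/-- on the upper half-plane, `exp(∑_{s∈S₋}(a_s/s)e^{-2πisw})`
admits an absolutely convergent Dirichlet-type expansion over the set `U` of
all finite sums of elements of `S₋`. -/
theorem stmt14 (Sneg : Set ℝ) (s₁ : ℝ) (hs₁ : s₁ < 0)
    (hbound : Sneg ⊆ Set.Iic s₁)
    (hfin : ∀ c d : ℝ, (Sneg ∩ Set.Icc c d).Finite)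
    (a : ℝ → ℂ)
    (hgrowth : ∃ C : ℝ, ∃ m > (0:ℝ), ∀ R ≥ (1:ℝ),
      ∑ s ∈ (hfin (-R) 0).toFinset, ‖a s‖ ≤ C * R ^ m)
    (U : Set ℝ)
    (hU : U = {x : ℝ | ∃ l : List ℝ, (∀ s ∈ l, s ∈ Sneg) ∧ l.sum = x}) :
    ∃ b : ℝ → ℂ, ∀ w : ℂ, 0 < w.im →
      Summable (fun s : Sneg =>
        ‖(a s / (s : ℝ)) * Complex.exp (-(2 * π * Complex.I * (s : ℝ) * w))‖) ∧
      Summable (fun u : U =>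
        ‖b u * Complex.exp (-(2 * π * Complex.I * (u : ℝ) * w))‖) ∧
      Complex.exp (∑' s : Sneg,
          (a s / (s : ℝ)) * Complex.exp (-(2 * π * Complex.I * (s : ℝ) * w))) =
        ∑' u : U, b u * Complex.exp (-(2 * π * Complex.I * (u : ℝ) * w)) := by
  obtain ⟨C, m, -, hgrowth⟩ := hgrowth
  change U = finiteSums Sneg at hU
  subst hU
  set c : Sneg → ℂ := fun s => a s / (s : ℝ)
  set b : ℝ → ℂ := fun u => ∑' x : tupleSum ⁻¹' {u}, expSeriesTerm c x.1
  refine ⟨b, fun w hw => ?_⟩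
  set E : ℝ → ℂ := fun u => exp (-(2 * π * I * u * w))
  have hc : Summable fun s : Sneg => ‖c s * E s‖ :=
    summable_norm_div_mul_exp hs₁ hbound hfin hgrowth hw
  have hterm (x : (n : ℕ) × (Fin n → Sneg)) :
      expSeriesTerm (fun s => c s * E s) x = expSeriesTerm c x * E (tupleSum x) := by
    rw [expSeriesTerm_mul_exp]
    simp [E, tupleSum, Finset.sum_mul, Finset.mul_sum]
  obtain ⟨hsummable, hhasSum⟩ := hasSum_tsum_fiber_mul (g := E) tupleSum
    ((summable_norm_expSeriesTerm hc).congr fun x => by rw [hterm])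
  have hsupp : Function.support (fun u => b u * E u) ⊆ finiteSums Sneg :=
    (Function.support_mul_subset_left _ _).trans (support_tsum_fiber_tupleSum_subset _)
  refine ⟨hc, hsummable.subtype _, ?_⟩
  calc exp (∑' s, c s * E s) = ∑' x, expSeriesTerm (fun s => c s * E s) x :=
        (hasSum_expSeriesTerm hc).tsum_eq.symm
    _ = ∑' x, expSeriesTerm c x * E (tupleSum x) := tsum_congr hterm
    _ = ∑' u, b u * E u := hhasSum.tsum_eq.symm
    _ = ∑' u : finiteSums Sneg, b u * E u := (tsum_subtype_eq_of_support_subset hsupp).symm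
end

section
/- Let p be an entire function of exponential type satisfying |p(w)| ≤ C for Im w ≥ 0 and |p(w)| ≤ C e^{σ|Im w|} for Im w ≤ 0, and let ε > 0. Define p_ε(w) = p(w)(sin(πεw)/(πεw))². Then p_ε is an entire function of exponential type, p_ε restricted to every horizontal line lies in L¹ ∩ L², and its inverse Fourier transform p̌_ε is a continuous function vanishing outside the interval (−σ/(2π) − ε, ε). -/
/-!
Since `‖sin z‖ ≤ e^{|Im z|}` and `‖sin z‖ ≤ ‖z‖ e^{|Im z|}`, the factor `(sin(πεw)/(πεw))²` is
`O(e^{2πε|Im w|} / (1 + (Re w)²))`, so `p_ε` has exponential type and is dominated on every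
horizontal line by an integrable multiple of `1 / (1 + x²)`. For `t > ε` the function
`e^{2πitw} p_ε(w)` decays like `e^{-2π(t - ε) Im w}` in the upper half-plane; moving the line of
integration up by Cauchy's theorem shows `p̌_ε(t) = 0`. For `t < -σ/(2π) - ε` the same works in
the lower half-plane, and the endpoints follow by continuity of `p̌_ε`.
-/

open MeasureTheory Set Complex Filter
open scoped Real Topology

lemma norm_cexp_mul_I_le (z : ℂ) : ‖cexp (z * I)‖ ≤ Real.exp |z.im| := by
  simpa [Complex.norm_exp] using neg_le_abs z.im

lemma norm_cexp_neg_mul_I_le (z : ℂ) : ‖cexp (-z * I)‖ ≤ Real.exp |z.im| := by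
  simpa [Complex.norm_exp] using le_abs_self z.im

lemma norm_cos_le_exp_abs_im (z : ℂ) : ‖cos z‖ ≤ Real.exp |z.im| := by
  rw [Complex.cos, norm_div, Complex.norm_ofNat]
  linarith [norm_add_le (cexp (z * I)) (cexp (-z * I)), norm_cexp_mul_I_le z,
    norm_cexp_neg_mul_I_le z]

lemma norm_sin_le_exp_abs_im (z : ℂ) : ‖sin z‖ ≤ Real.exp |z.im| := by
  rw [Complex.sin, norm_div, norm_mul, Complex.norm_I, mul_one, Complex.norm_ofNat]
  linarith [norm_sub_le (cexp (-z * I)) (cexp (z * I)), norm_cexp_mul_I_le z,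
    norm_cexp_neg_mul_I_le z]

lemma norm_sin_le_norm_mul_exp_abs_im (z : ℂ) : ‖sin z‖ ≤ ‖z‖ * Real.exp |z.im| := by
  have hstrip : Convex ℝ (im ⁻¹' Icc (-|z.im|) |z.im|) :=
    (convex_Icc _ _).linear_preimage imLm
  have h := hstrip.norm_image_sub_le_of_norm_deriv_le (x := 0) (y := z)
    (fun w _ ↦ differentiableAt_sin)
    (fun w hw ↦ by
      simpa using (norm_cos_le_exp_abs_im w).trans (Real.exp_le_exp.2 (abs_le.2 hw)))
    (by simp) (abs_le.1 le_rfl)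
  simpa [mul_comm] using h

lemma norm_dslope_sin_le (z : ℂ) : ‖dslope sin 0 z‖ ≤ Real.exp |z.im| := by
  rcases eq_or_ne z 0 with rfl | hz
  · simp [dslope_same]
  · rw [dslope_of_ne _ hz, slope_def_field, sin_zero, sub_zero, sub_zero, norm_div,
      div_le_iff₀ (norm_pos_iff.2 hz), mul_comm]
    exact norm_sin_le_norm_mul_exp_abs_im z

lemma norm_mul_norm_dslope_sin_le (z : ℂ) : ‖z‖ * ‖dslope sin 0 z‖ ≤ Real.exp |z.im| := by
  have h : z * dslope sin 0 z = sin z := by simpa using sub_smul_dslope sin 0 z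
  rw [← norm_mul, h]
  exact norm_sin_le_exp_abs_im z

lemma norm_dslope_sin_sq_le (z : ℂ) :
    ‖dslope sin 0 z‖ ^ 2 ≤ 2 * Real.exp (2 * |z.im|) / (1 + z.re ^ 2) := by
  have h1 := norm_dslope_sin_le z
  have h2 := (mul_le_mul_of_nonneg_right (abs_re_le_norm z) (norm_nonneg _)).trans
    (norm_mul_norm_dslope_sin_le z)
  rw [le_div_iff₀ (by positivity), show 2 * |z.im| = |z.im| + |z.im| by ring, Real.exp_add]
  have h0 : 0 ≤ ‖dslope sin 0 z‖ := norm_nonneg _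
  -- sum of the squares of `h1` and `h2`
  nlinarith [abs_nonneg z.re, sq_abs z.re, mul_nonneg (abs_nonneg z.re) h0]

/-- The paper's `p_ε`, with `dslope sin 0` as the entire extension of `sin z / z`. -/
noncomputable def mulSincSq (ε : ℝ) (p : ℂ → ℂ) (w : ℂ) : ℂ :=
  p w * dslope sin 0 (π * ε * w) ^ 2

section MulSincSq

variable {ε : ℝ} {p : ℂ → ℂ}

lemma differentiable_dslope_sin : Differentiable ℂ (dslope sin 0) :=
  differentiableOn_univ.1 <|
    (differentiableOn_dslope univ_mem).2 differentiable_sin.differentiableOn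

lemma Differentiable.mulSincSq (hp : Differentiable ℂ p) : Differentiable ℂ (mulSincSq ε p) :=
  hp.mul ((differentiable_dslope_sin.comp (differentiable_id.const_mul _)).pow 2)

lemma mulSincSq_of_ne_zero (hε : ε ≠ 0) {w : ℂ} (hw : w ≠ 0) :
    mulSincSq ε p w = p w * (sin (π * ε * w) / (π * ε * w)) ^ 2 := by
  have hne : (π : ℂ) * ε * w ≠ 0 := by simp [Real.pi_ne_zero, hε, hw]
  rw [mulSincSq, dslope_of_ne _ hne, slope_def_field, sin_zero, sub_zero, sub_zero]

lemma norm_mulSincSq_le (hε : 0 ≤ ε) {x y M κ : ℝ}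
    (hp : ‖p (x + y * I)‖ ≤ M * Real.exp (κ * |y|)) :
    ‖mulSincSq ε p (x + y * I)‖ ≤
      Real.exp ((κ + 2 * π * ε) * |y|) * (2 * M / (1 + (π * ε * x) ^ 2)) := by
  have h := norm_dslope_sin_sq_le ((π : ℂ) * ε * (x + y * I))
  have hre : ((π : ℂ) * ε * (x + y * I)).re = π * ε * x := by simp
  have him : |((π : ℂ) * ε * (x + y * I)).im| = π * ε * |y| := by
    simp [abs_mul, abs_of_nonneg hε, abs_of_pos Real.pi_pos]
  rw [hre, him, ← mul_assoc, ← mul_assoc] at h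
  rw [mulSincSq, norm_mul, norm_pow]
  calc _ ≤ M * Real.exp (κ * |y|) * (2 * Real.exp (2 * π * ε * |y|) / (1 + (π * ε * x) ^ 2)) :=
        mul_le_mul hp h (by positivity) ((norm_nonneg _).trans hp)
    _ = _ := by rw [add_mul, Real.exp_add]; ring

lemma norm_mulSincSq_le_of_im_nonneg (hε : 0 ≤ ε) {C : ℝ}
    (hupper : ∀ w : ℂ, 0 ≤ w.im → ‖p w‖ ≤ C) {x y : ℝ} (hy : 0 ≤ y) :
    ‖mulSincSq ε p (x + y * I)‖ ≤
      Real.exp (2 * π * ε * y) * (2 * C / (1 + (π * ε * x) ^ 2)) := by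
  have hp : ‖p (x + y * I)‖ ≤ C * Real.exp (0 * |y|) := by
    simpa using hupper (x + y * I) (by simpa using hy)
  simpa [abs_of_nonneg hy] using norm_mulSincSq_le hε hp

lemma norm_mulSincSq_le_of_halfPlanes (hε : 0 ≤ ε) {C σ : ℝ} (hC : 0 ≤ C) (hσ : 0 ≤ σ)
    (hupper : ∀ w : ℂ, 0 ≤ w.im → ‖p w‖ ≤ C)
    (hlower : ∀ w : ℂ, w.im ≤ 0 → ‖p w‖ ≤ C * Real.exp (σ * |w.im|)) (x y : ℝ) :
    ‖mulSincSq ε p (x + y * I)‖ ≤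
      Real.exp ((σ + 2 * π * ε) * |y|) * (2 * C / (1 + (π * ε * x) ^ 2)) := by
  refine norm_mulSincSq_le hε ?_
  rcases le_total 0 y with hy | hy
  · exact (hupper _ (by simpa using hy)).trans
      (le_mul_of_one_le_right hC (Real.one_le_exp (by positivity)))
  · simpa using hlower (x + y * I) (by simpa using hy)

end MulSincSq

section Profile

variable {c : ℝ}

lemma integrable_div_one_add_mul_sq (B : ℝ) (hc : c ≠ 0) :
    Integrable (fun x : ℝ ↦ B / (1 + (c * x) ^ 2)) := by
  simpa [div_eq_mul_inv] using (integrable_inv_one_add_sq.comp_mul_left' hc).const_mul B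

lemma tendsto_div_one_add_mul_sq_cocompact (B : ℝ) (hc : c ≠ 0) :
    Tendsto (fun x : ℝ ↦ B / (1 + (c * x) ^ 2)) (cocompact ℝ) (𝓝 0) := by
  refine tendsto_const_nhds.div_atTop (tendsto_atTop_add_const_left _ 1 ?_)
  have h := (tendsto_pow_atTop two_ne_zero).comp
    ((tendsto_norm_cocompact_atTop (E := ℝ)).const_mul_atTop (abs_pos.2 hc))
  refine h.congr fun x ↦ ?_
  simp [mul_pow, sq_abs]

lemma div_one_add_mul_sq_le {B : ℝ} (hB : 0 ≤ B) (x : ℝ) : B / (1 + (c * x) ^ 2) ≤ B :=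
  div_le_self hB (by nlinarith [sq_nonneg (c * x)])

lemma norm_le_mul_exp_norm_of_forall_add_mul_I {f : ℂ → ℂ} {τ B : ℝ} (hτ : 0 ≤ τ) (hB : 0 ≤ B)
    (hf : ∀ x y : ℝ, ‖f (x + y * I)‖ ≤ Real.exp (τ * |y|) * (B / (1 + (c * x) ^ 2))) (w : ℂ) :
    ‖f w‖ ≤ B * Real.exp (τ * ‖w‖) := by
  have h := hf w.re w.im
  rw [re_add_im] at h
  refine h.trans ?_
  rw [mul_comm B]
  gcongr
  exacts [abs_im_le_norm w, div_one_add_mul_sq_le hB _]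

end Profile

lemma memLp_two_of_integrable_of_norm_le {α E : Type*} [MeasurableSpace α] {μ : Measure α}
    [NormedAddCommGroup E] {f : α → E} (hf : Integrable f μ) {K : ℝ} (hK : ∀ x, ‖f x‖ ≤ K) :
    MemLp f 2 μ := by
  rw [memLp_two_iff_integrable_sq_norm hf.1]
  refine (hf.norm.const_mul K).mono' (hf.1.norm.pow 2) (ae_of_all _ fun x ↦ ?_)
  rw [Real.norm_eq_abs, abs_of_nonneg (by positivity), sq]
  exact mul_le_mul_of_nonneg_right (hK x) (norm_nonneg _)

section ContourShift

variable {f : ℂ → ℂ} {g : ℝ → ℝ} {y : ℝ}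

lemma integrable_add_mul_I_of_norm_le (hf : Continuous f) (hg : Integrable g) {u : ℝ}
    (hbd : ∀ x : ℝ, ‖f (x + u * I)‖ ≤ g x) : Integrable (fun x : ℝ ↦ f (x + u * I)) :=
  hg.mono' (hf.comp (by fun_prop)).aestronglyMeasurable (ae_of_all _ hbd)

lemma tendsto_intervalIntegral_add_mul_I_cocompact (hg0 : Tendsto g (cocompact ℝ) (𝓝 0))
    (hbd : ∀ x u : ℝ, u ∈ uIcc 0 y → ‖f (x + u * I)‖ ≤ g x) :
    Tendsto (fun R : ℝ ↦ ∫ u in (0 : ℝ)..y, f (R + u * I)) (cocompact ℝ) (𝓝 0) := by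
  refine squeeze_zero_norm (fun R ↦ intervalIntegral.norm_integral_le_of_norm_le_const
    fun u hu ↦ hbd R u (uIoc_subset_uIcc hu)) ?_
  simpa using hg0.mul_const |y - 0|

theorem integral_add_mul_I_eq_integral (hf : Differentiable ℂ f) (hg : Integrable g)
    (hg0 : Tendsto g (cocompact ℝ) (𝓝 0))
    (hbd : ∀ x u : ℝ, u ∈ uIcc 0 y → ‖f (x + u * I)‖ ≤ g x) :
    ∫ x : ℝ, f (x + y * I) = ∫ x : ℝ, f x := by
  have hline (u : ℝ) (hu : u ∈ uIcc 0 y) := integrable_add_mul_I_of_norm_le hf.continuous hg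
    (hbd · u hu)
  have hvert := tendsto_intervalIntegral_add_mul_I_cocompact hg0 hbd
  have hrect (R : ℝ) : ∫ x in -R..R, f (x + y * I) = (∫ x in -R..R, f x) +
      I • (∫ u in (0 : ℝ)..y, f (R + u * I)) - I • (∫ u in (0 : ℝ)..y, f (-R + u * I)) := by
    have h := integral_boundary_rect_eq_zero_of_differentiableOn f (-(R : ℂ)) (R + y * I)
      hf.differentiableOn
    simp only [neg_re, ofReal_re, neg_im, ofReal_im, neg_zero, add_re, mul_re, I_re, mul_zero,
      I_im, mul_one, sub_self, add_zero, add_im, mul_im, zero_add, ofReal_zero, zero_mul,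
      ofReal_neg] at h
    linear_combination -h
  have hlim := (intervalIntegral_tendsto_integral (by simpa using hline 0 left_mem_uIcc)
      tendsto_neg_atTop_atBot tendsto_id).add
      ((hvert.comp (tendsto_id.mono_right atTop_le_cocompact)).const_smul I) |>.sub
      ((hvert.comp (tendsto_neg_atTop_atBot.mono_right atBot_le_cocompact)).const_smul I)
  refine tendsto_nhds_unique (intervalIntegral_tendsto_integral (hline y right_mem_uIcc)
    tendsto_neg_atTop_atBot tendsto_id) ?_
  simpa [hrect] using hlim

theorem integral_eq_zero_of_norm_le_exp_neg_mul_im (hf : Differentiable ℂ f) (hg : Integrable g)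
    (hg0 : Tendsto g (cocompact ℝ) (𝓝 0)) {a : ℝ} (ha : 0 < a)
    (hbd : ∀ x y : ℝ, 0 ≤ y → ‖f (x + y * I)‖ ≤ Real.exp (-(a * y)) * g x) :
    ∫ x : ℝ, f x = 0 := by
  have hg_nonneg (x : ℝ) : 0 ≤ g x :=
    nonneg_of_mul_nonneg_right ((norm_nonneg _).trans (hbd x 0 le_rfl)) (Real.exp_pos _)
  have hshift (y : ℝ) (hy : 0 ≤ y) : ‖∫ x : ℝ, f x‖ ≤ Real.exp (-(a * y)) * ∫ x, g x := by
    rw [← integral_add_mul_I_eq_integral hf hg hg0 (y := y) fun x u hu ↦ ?_, ← integral_const_mul]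
    · exact norm_integral_le_of_norm_le (hg.const_mul _) (ae_of_all _ (hbd · y hy))
    · rw [uIcc_of_le hy] at hu
      refine (hbd x u hu.1).trans (mul_le_of_le_one_left (hg_nonneg x) ?_)
      exact Real.exp_le_one_iff.2 (neg_nonpos.2 (mul_nonneg ha.le hu.1))
  have hdecay : Tendsto (fun y : ℝ ↦ Real.exp (-(a * y)) * ∫ x, g x) atTop (𝓝 0) := by
    simpa using (Real.tendsto_exp_atBot.comp
      (tendsto_neg_atTop_atBot.comp (tendsto_id.const_mul_atTop ha))).mul_const (∫ x, g x)
  exact norm_le_zero_iff.1 (ge_of_tendsto hdecay ((eventually_ge_atTop 0).mono hshift))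

end ContourShift

lemma norm_cexp_two_pi_I_mul (t : ℝ) (w : ℂ) :
    ‖cexp (2 * π * I * t * w)‖ = Real.exp (-(2 * π * t * w.im)) := by
  simp [Complex.norm_exp, mul_re, mul_im]

section PaleyWiener

variable {q : ℂ → ℂ} {g : ℝ → ℝ} {b t : ℝ}

theorem integral_cexp_mul_eq_zero_of_upperHalfPlane (hq : Differentiable ℂ q) (hg : Integrable g)
    (hg0 : Tendsto g (cocompact ℝ) (𝓝 0)) (hbt : b < t)
    (hbd : ∀ x y : ℝ, 0 ≤ y → ‖q (x + y * I)‖ ≤ Real.exp (2 * π * b * y) * g x) :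
    ∫ x : ℝ, cexp (2 * π * I * t * x) * q x = 0 := by
  refine integral_eq_zero_of_norm_le_exp_neg_mul_im (f := fun w ↦ cexp (2 * π * I * t * w) * q w)
    (by fun_prop) hg hg0 (a := 2 * π * (t - b)) (by nlinarith [Real.pi_pos]) fun x y hy ↦ ?_
  rw [norm_mul, norm_cexp_two_pi_I_mul]
  calc _ ≤ Real.exp (-(2 * π * t * y)) * (Real.exp (2 * π * b * y) * g x) := by
        simpa using mul_le_mul_of_nonneg_left (hbd x y hy) (Real.exp_pos _).le
    _ = Real.exp (-(2 * π * (t - b) * y)) * g x := by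
        rw [← mul_assoc, ← Real.exp_add]; ring_nf

theorem integral_cexp_mul_eq_zero_of_lowerHalfPlane (hq : Differentiable ℂ q) (hg : Integrable g)
    (hg0 : Tendsto g (cocompact ℝ) (𝓝 0)) (htb : t < -b)
    (hbd : ∀ x y : ℝ, y ≤ 0 → ‖q (x + y * I)‖ ≤ Real.exp (-(2 * π * b * y)) * g x) :
    ∫ x : ℝ, cexp (2 * π * I * t * x) * q x = 0 := by
  -- reflect through `w ↦ -w`, which swaps the half-planes and `t ↦ -t`
  have hneg := integral_cexp_mul_eq_zero_of_upperHalfPlane (q := fun w ↦ q (-w)) (t := -t)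
    (hq.comp differentiable_neg) hg.comp_neg
    (hg0.comp (Homeomorph.neg ℝ).isClosedEmbedding.tendsto_cocompact) (by linarith)
    fun x y hy ↦ by
      rw [show -((x : ℂ) + y * I) = ↑(-x) + ↑(-y) * I by push_cast; ring]
      simpa using hbd (-x) (-y) (by linarith)
  rw [← integral_neg_eq_self]
  simpa [mul_neg, neg_mul] using hneg

end PaleyWiener

lemma continuous_integral_cexp_mul {f : ℝ → ℂ} (hf : Integrable f) :
    Continuous fun t : ℝ ↦ ∫ x : ℝ, cexp (2 * π * I * t * x) * f x :=
  continuous_of_dominated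
    (fun _ ↦ (Continuous.aestronglyMeasurable (by fun_prop)).mul hf.1)
    (fun t ↦ ae_of_all _ fun x ↦ by simp [norm_cexp_two_pi_I_mul]) hf.norm
    (ae_of_all _ fun _ ↦ by fun_prop)

lemma forall_notMem_Ioo_of_forall_notMem_Icc {E : Type*} [TopologicalSpace E] [T2Space E]
    [Zero E] {F : ℝ → E} (hF : Continuous F) {a b : ℝ} (h : ∀ t ∉ Icc a b, F t = 0) :
    ∀ t ∉ Ioo a b, F t = 0 := by
  intro t ht
  have hcl : t ∈ closure (Icc a b)ᶜ := by rwa [closure_compl, interior_Icc]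
  exact (isClosed_eq hF continuous_const).closure_subset_iff.2 h hcl

/-- Paley–Wiener step: for `p` entire of exponential type,
bounded on the upper half-plane and `≤ C e^{σ|Im w|}` on the lower one, the
function `p_ε(w) = p(w)(sin(πεw)/(πεw))²` is entire of exponential type, lies
in `L¹ ∩ L²` on every horizontal line, and its inverse Fourier transform is a
continuous function vanishing outside `(-σ/(2π) - ε, ε)`. -/
theorem stmt15 (p : ℂ → ℂ) (hp : Differentiable ℂ p)
    (C σ : ℝ) (hC : 0 < C) (hσ : 0 < σ)
    (hupper : ∀ w : ℂ, 0 ≤ w.im → ‖p w‖ ≤ C)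
    (hlower : ∀ w : ℂ, w.im ≤ 0 → ‖p w‖ ≤ C * Real.exp (σ * |w.im|))
    (ε : ℝ) (hε : 0 < ε) :
    ∃ q : ℂ → ℂ,
      Differentiable ℂ q ∧
      (∀ w : ℂ, w ≠ 0 → q w =
        p w * (Complex.sin (π * ε * w) / (π * ε * w)) ^ 2) ∧
      (∃ A > (0:ℝ), ∃ τ > (0:ℝ), ∀ w : ℂ, ‖q w‖ ≤ A * Real.exp (τ * ‖w‖)) ∧
      (∀ y : ℝ, Integrable (fun x : ℝ => q (x + y * Complex.I)) ∧
        MemLp (fun x : ℝ => q (x + y * Complex.I)) 2) ∧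
      Continuous (fun t : ℝ => ∫ x : ℝ,
        Complex.exp (2 * π * Complex.I * t * x) * q x) ∧
      (∀ t : ℝ, t ∉ Set.Ioo (-(σ / (2 * π)) - ε) ε →
        (∫ x : ℝ, Complex.exp (2 * π * Complex.I * t * x) * q x) = 0) := by
  have hπε : π * ε ≠ 0 := by positivity
  have hg := integrable_div_one_add_mul_sq (2 * C) hπε
  have hg0 := tendsto_div_one_add_mul_sq_cocompact (2 * C) hπε
  have hq : Differentiable ℂ (mulSincSq ε p) := hp.mulSincSq
  have hq_all := norm_mulSincSq_le_of_halfPlanes hε.le hC.le hσ.le hupper hlower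
  have hline (y : ℝ) : Integrable (fun x : ℝ ↦ mulSincSq ε p (x + y * I)) :=
    integrable_add_mul_I_of_norm_le hq.continuous (hg.const_mul _) (hq_all · y)
  have hF := continuous_integral_cexp_mul (by simpa using hline 0)
  refine ⟨mulSincSq ε p, hq, fun w hw ↦ mulSincSq_of_ne_zero hε.ne' hw,
    ⟨2 * C, by positivity, σ + 2 * π * ε, by positivity,
      norm_le_mul_exp_norm_of_forall_add_mul_I (by positivity) (by positivity) hq_all⟩,
    fun y ↦ ⟨hline y, memLp_two_of_integrable_of_norm_le (hline y) fun x ↦ (hq_all x y).trans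
      (mul_le_mul_of_nonneg_left (div_one_add_mul_sq_le (by positivity) x) (by positivity))⟩,
    hF, forall_notMem_Ioo_of_forall_notMem_Icc hF fun t ht ↦ ?_⟩
  simp only [mem_Icc, not_and_or, not_le] at ht
  rcases ht with ht | ht
  · refine integral_cexp_mul_eq_zero_of_lowerHalfPlane hq hg hg0 (b := σ / (2 * π) + ε)
      (by linarith) fun x y hy ↦ (hq_all x y).trans_eq ?_
    rw [abs_of_nonpos hy]
    congr 2
    field_simp
  · exact integral_cexp_mul_eq_zero_of_upperHalfPlane hq hg hg0 ht
      fun _ _ hy ↦ norm_mulSincSq_le_of_im_nonneg hε.le hupper hy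
end

section
/- Let U ⊂ (−∞, 0] be a locally finite set, b_u ∈ ℂ, and suppose p is an entire function of exponential type σ, bounded on the upper half-plane, such that p(w) = ∑_{u∈U} b_u e^{−2πiuw} (absolutely convergent) for all w with Im w > 0, and such that the inverse Fourier transform of p_ε(w) = p(w)(sin(πεw)/(πεw))² vanishes outside (−σ−ε, ε) for every small ε > 0. Then b_u = 0 for every u ∈ U with u < −σ; consequently p is an exponential polynomial p(w) = ∑_{k=1}^n b_k e^{iγ_k w} with finitely many real frequencies γ_k ≥ 0. -/
/-!
The tent `T_ε(ξ) = max(0, ε - |ξ|) / ε²` has Fourier transform `S_ε(x) = (sin(πεx)/(πεx))²`, so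
integrating the expansion of `p` along the line `Im w = δ` term by term gives
`𝓕⁻(p(· + iδ) S_ε)(t) = ∑_u b_u e^{2πuδ} T_ε(t - u)`. If `ε` is smaller than the gap of `U` around
`u₀ ∈ U`, only `b_{u₀} e^{2πu₀δ} / ε` survives at `t = u₀`; letting `δ → 0⁺` (dominated
convergence, `p` being bounded on the closed upper half-plane) yields `𝓕⁻(p S_ε)(u₀) = b_{u₀} / ε`,
which vanishes when `u₀ < -σ`. What remains of the expansion is a finite exponential sum, equal to
`p` on the upper half-plane and hence everywhere by the identity theorem.
-/

open MeasureTheory Set Complex Filter Topology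
open scoped Real FourierTransform

-- `sincSq ε 0 = 0` (not `1`) because `0 / 0 = 0`; hence the hypothesis `x ≠ 0` in `fourier_tent`.
noncomputable def sincSq (ε x : ℝ) : ℂ := (Complex.sin (π * ε * x) / (π * ε * x)) ^ 2

noncomputable def tent (ε ξ : ℝ) : ℂ := ((max 0 (ε - |ξ|)) / ε ^ 2 : ℝ)

lemma sin_div_sq_le (y : ℝ) : (Real.sin y / y) ^ 2 ≤ 2 / (1 + y ^ 2) := by
  rcases eq_or_ne y 0 with rfl | hy
  · norm_num
  rw [div_pow, div_le_div_iff₀ (by positivity) (by positivity)]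
  nlinarith [Real.sin_sq_le_one y, Real.sin_sq_le_sq (x := y), sq_nonneg y]

lemma sincSq_eq_ofReal (ε x : ℝ) : sincSq ε x = ((Real.sin (π * ε * x) / (π * ε * x)) ^ 2 : ℝ) := by
  simp [sincSq]

lemma integrable_sincSq {ε : ℝ} (hε : ε ≠ 0) : Integrable (sincSq ε) := by
  have hπε : π * ε ≠ 0 := mul_ne_zero Real.pi_ne_zero hε
  have hdom : Integrable fun x : ℝ => 2 * (1 + (π * ε * x) ^ 2)⁻¹ :=
    (integrable_inv_one_add_sq.comp_mul_left' hπε).const_mul 2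
  have hmeas : Measurable (sincSq ε) := by unfold sincSq; fun_prop
  refine hdom.mono' hmeas.aestronglyMeasurable (ae_of_all _ fun x => ?_)
  rw [sincSq_eq_ofReal, Complex.norm_real, Real.norm_of_nonneg (sq_nonneg _), ← div_eq_mul_inv]
  exact sin_div_sq_le _

lemma continuous_tent (ε : ℝ) : Continuous (tent ε) := by
  unfold tent; fun_prop

lemma tent_eq_zero {ε ξ : ℝ} (h : ε ≤ |ξ|) : tent ε ξ = 0 := by
  simp [tent, max_eq_left (sub_nonpos.2 h)]

lemma tent_zero {ε : ℝ} (hε : 0 < ε) : tent ε 0 = (ε : ℂ)⁻¹ := by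
  simp [tent, max_eq_right hε.le, sq]

lemma support_tent (ε : ℝ) : Function.support (tent ε) ⊆ Ioc (-ε) ε := fun ξ hξ => by
  by_contra h
  refine hξ (tent_eq_zero (le_abs.2 ?_))
  rw [mem_Ioc, not_and_or, not_lt, not_le] at h
  rcases h with h | h
  · right; linarith
  · left; linarith

lemma integrable_tent (ε : ℝ) : Integrable (tent ε) :=
  (continuous_tent ε).integrable_of_hasCompactSupport <|
    HasCompactSupport.intro' isCompact_Icc isClosed_Icc fun _ h =>
      Function.notMem_support.1 fun h' => h (Ioc_subset_Icc_self (support_tent ε h'))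

lemma integral_affine_mul_cexp {c : ℂ} (hc : c ≠ 0) (α β : ℂ) (a b : ℝ) :
    ∫ ξ in a..b, (α + β * ξ) * cexp (c * ξ) =
      ((α + β * b) / c - β / c ^ 2) * cexp (c * b)
        - ((α + β * a) / c - β / c ^ 2) * cexp (c * a) := by
  refine intervalIntegral.integral_eq_sub_of_hasDerivAt
    (f := fun ξ : ℝ => ((α + β * ξ) / c - β / c ^ 2) * cexp (c * ξ)) (fun ξ _ => ?_)
    ((show Continuous fun ξ : ℝ => (α + β * ξ) * cexp (c * ξ) by fun_prop).intervalIntegrable _ _)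
  have hexp : HasDerivAt (fun ξ : ℝ => cexp (c * ξ)) (c * cexp (c * ξ)) ξ := by
    simpa [mul_comm] using ((hasDerivAt_id (ξ : ℂ)).const_mul c).cexp.comp_ofReal
  have hlin : HasDerivAt (fun ξ : ℝ => (α + β * ξ) / c - β / c ^ 2) (β / c) ξ := by
    simpa using (((hasDerivAt_id (ξ : ℂ)).const_mul β).const_add α).comp_ofReal.div_const c
      |>.sub_const (β / c ^ 2)
  refine (hlin.mul hexp).congr_deriv ?_
  field_simp
  ring

lemma integral_cexp_mul_tent {ε : ℝ} (hε : 0 < ε) {c : ℂ} (hc : c ≠ 0) :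
    ∫ ξ : ℝ, cexp (c * ξ) * tent ε ξ = (cexp (c * ε) + cexp (-(c * ε)) - 2) / (c ^ 2 * ε ^ 2) := by
  have hcont : Continuous fun ξ : ℝ => cexp (c * ξ) * tent ε ξ := by
    have := continuous_tent ε; fun_prop
  have h_left : ∫ ξ in (-ε)..0, cexp (c * ξ) * tent ε ξ
      = (ε : ℂ)⁻¹ ^ 2 * ∫ ξ in (-ε)..0, (ε + 1 * ξ) * cexp (c * ξ) := by
    rw [← intervalIntegral.integral_const_mul]
    refine intervalIntegral.integral_congr fun ξ hξ => ?_
    rw [uIcc_of_le (by linarith)] at hξ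
    simp only [tent, abs_of_nonpos hξ.2, max_eq_right (show 0 ≤ ε - -ξ by linarith [hξ.1])]
    push_cast
    ring
  have h_right : ∫ ξ in (0:ℝ)..ε, cexp (c * ξ) * tent ε ξ
      = (ε : ℂ)⁻¹ ^ 2 * ∫ ξ in (0:ℝ)..ε, (ε + (-1) * ξ) * cexp (c * ξ) := by
    rw [← intervalIntegral.integral_const_mul]
    refine intervalIntegral.integral_congr fun ξ hξ => ?_
    rw [uIcc_of_le hε.le] at hξ
    simp only [tent, abs_of_nonneg hξ.1, max_eq_right (show 0 ≤ ε - ξ by linarith [hξ.2])]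
    push_cast
    ring
  have hε' : (ε : ℂ) ≠ 0 := ofReal_ne_zero.2 hε.ne'
  rw [← intervalIntegral.integral_eq_integral_of_support_subset
      ((Function.support_mul_subset_right _ _).trans (support_tent ε)),
    ← intervalIntegral.integral_add_adjacent_intervals (b := 0)
      (hcont.intervalIntegrable _ _) (hcont.intervalIntegrable _ _),
    h_left, h_right, integral_affine_mul_cexp hc, integral_affine_mul_cexp hc]
  simp only [ofReal_neg, ofReal_zero, mul_zero, Complex.exp_zero, mul_neg]
  field_simp
  ring

lemma fourier_tent {ε : ℝ} (hε : 0 < ε) {x : ℝ} (hx : x ≠ 0) : 𝓕 (tent ε) x = sincSq ε x := by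
  set c : ℂ := -2 * π * x * I with hc_def
  have hc : c ≠ 0 := by simp [c, hx, Real.pi_ne_zero]
  have h_cos : cexp (c * ε) + cexp (-(c * ε)) = 2 * Complex.cos (2 * (π * ε * x)) := by
    rw [Complex.two_cos, hc_def]; ring_nf
  have h_sin : 2 * Complex.cos (2 * (π * ε * x)) = 2 - 4 * Complex.sin (π * ε * x) ^ 2 := by
    rw [Complex.cos_two_mul]; linear_combination 4 * Complex.sin_sq_add_cos_sq (π * ε * x)
  have hc2 : c ^ 2 = -4 * π ^ 2 * x ^ 2 := by rw [hc_def]; ring_nf; rw [I_sq]; ring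
  have hε' : (ε : ℂ) ≠ 0 := ofReal_ne_zero.2 hε.ne'
  have hx' : (x : ℂ) ≠ 0 := ofReal_ne_zero.2 hx
  have hπ : (π : ℂ) ≠ 0 := ofReal_ne_zero.2 Real.pi_ne_zero
  calc 𝓕 (tent ε) x = ∫ ξ : ℝ, cexp (c * ξ) * tent ε ξ := by
        rw [Real.fourier_eq']
        congr 1 with ξ
        rw [RCLike.inner_apply, conj_trivial, smul_eq_mul, hc_def]
        push_cast; ring_nf
    _ = sincSq ε x := by
        rw [integral_cexp_mul_tent hε hc, h_cos, h_sin, hc2, sincSq]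
        field_simp
        ring

lemma fourierInv_sincSq {ε : ℝ} (hε : 0 < ε) : 𝓕⁻ (sincSq ε) = tent ε := by
  have hae : 𝓕 (tent ε) =ᵐ[volume] sincSq ε := by
    filter_upwards [measure_singleton (μ := volume) (0 : ℝ) |> compl_mem_ae_iff.2] with x hx
    exact fourier_tent hε hx
  ext t
  rw [← Real.fourierInv_congr_ae hae, (continuous_tent ε).fourierInv_fourier_eq
    (integrable_tent ε) ((integrable_sincSq hε.ne').congr hae.symm)]

lemma fourierInv_eq_integral (f : ℝ → ℂ) (t : ℝ) :
    𝓕⁻ f t = ∫ x : ℝ, cexp (2 * π * I * t * x) * f x := by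
  rw [Real.fourierInv_eq']
  congr 1 with x
  rw [RCLike.inner_apply, conj_trivial, smul_eq_mul]
  push_cast; ring_nf

lemma norm_cexp_two_pi_I_mul_s16 (s x : ℝ) : ‖cexp (2 * π * I * s * x)‖ = 1 := by
  rw [show 2 * π * I * s * x = ((2 * π * s * x : ℝ) : ℂ) * I by push_cast; ring,
    Complex.norm_exp_ofReal_mul_I]

lemma fourierInv_tsum_mul {ι : Type*} [Countable ι] {c : ι → ℂ} (hc : Summable fun i => ‖c i‖)
    (u : ι → ℝ) {g : ℝ → ℂ} (hg : Integrable g) (t : ℝ) :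
    𝓕⁻ (fun x : ℝ => (∑' i, c i * cexp (-(2 * π * I * u i * x))) * g x) t
      = ∑' i, c i * 𝓕⁻ g (t - u i) := by
  set F : ι → ℝ → ℂ := fun i x => c i * (cexp (2 * π * I * (t - u i : ℝ) * x) * g x)
  have hF : ∀ x : ℝ, cexp (2 * π * I * t * x) * ((∑' i, c i * cexp (-(2 * π * I * u i * x))) * g x)
      = ∑' i, F i x := by
    intro x
    rw [← tsum_mul_right, ← tsum_mul_left]
    congr 1 with i
    simp only [F]
    rw [show 2 * π * I * (t - u i : ℝ) * x = 2 * π * I * t * x + -(2 * π * I * u i * x) by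
      push_cast; ring, Complex.exp_add]
    ring
  have hFint : ∀ i, Integrable (F i) := fun i =>
    (hg.bdd_mul (c := 1) (by fun_prop)
      (ae_of_all _ fun x => (norm_cexp_two_pi_I_mul_s16 _ x).le)).const_mul (c i)
  have hFsum : Summable fun i => ∫ x, ‖F i x‖ := by
    have hnorm : ∀ i, ∫ x, ‖F i x‖ = ‖c i‖ * ∫ x, ‖g x‖ := fun i => by
      simp only [F, norm_mul, norm_cexp_two_pi_I_mul_s16, one_mul, integral_const_mul]
    simpa only [hnorm] using hc.mul_right (∫ x, ‖g x‖)
  rw [fourierInv_eq_integral]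
  simp_rw [hF, fourierInv_eq_integral, ← integral_tsum_of_summable_integral_norm hFint hFsum, F,
    integral_const_mul]

lemma tendsto_fourierInv_comp_add_mul_I {p : ℂ → ℂ} (hp : Continuous p) {M : ℝ}
    (hM : ∀ w : ℂ, 0 ≤ w.im → ‖p w‖ ≤ M) {g : ℝ → ℂ} (hg : Integrable g) (t : ℝ) :
    Tendsto (fun δ : ℝ => 𝓕⁻ (fun x : ℝ => p (x + δ * I) * g x) t) (𝓝[>] 0)
      (𝓝 (𝓕⁻ (fun x : ℝ => p x * g x) t)) := by
  simp_rw [fourierInv_eq_integral]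
  refine tendsto_integral_filter_of_dominated_convergence (fun x => M * ‖g x‖)
    (Eventually.of_forall fun δ => ?_) ?_ (hg.norm.const_mul M) (ae_of_all _ fun x => ?_)
  · exact (Continuous.aestronglyMeasurable (by fun_prop)).mul
      ((Continuous.aestronglyMeasurable (by fun_prop)).mul hg.aestronglyMeasurable)
  · filter_upwards [self_mem_nhdsWithin] with δ (hδ : 0 < δ)
    refine ae_of_all _ fun x => ?_
    rw [norm_mul, norm_cexp_two_pi_I_mul_s16, one_mul, norm_mul]
    exact mul_le_mul_of_nonneg_right (hM _ (by simpa using hδ.le)) (norm_nonneg _)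
  · have hcont : Continuous fun δ : ℝ => cexp (2 * π * I * t * x) * (p (x + δ * I) * g x) := by
      fun_prop
    simpa using (hcont.tendsto 0).mono_left nhdsWithin_le_nhds

lemma countable_of_finite_inter_Icc {U : Set ℝ} (hU : ∀ a b, (U ∩ Icc a b).Finite) :
    U.Countable := by
  refine (countable_iUnion fun n : ℕ => (hU (-n) n).countable).mono fun u hu => ?_
  obtain ⟨n, hn⟩ := exists_nat_ge |u|
  exact mem_iUnion.2 ⟨n, hu, abs_le.1 hn⟩

lemma exists_pos_le_abs_sub {U : Set ℝ} (hU : ∀ a b, (U ∩ Icc a b).Finite) (u₀ : ℝ) :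
    ∃ r > 0, ∀ v ∈ U, v ≠ u₀ → r ≤ |v - u₀| := by
  set V := (U ∩ Icc (u₀ - 1) (u₀ + 1)) \ {u₀}
  have hu₀ : u₀ ∉ V := fun h => h.2 rfl
  obtain ⟨r, hr, hball⟩ :=
    Metric.mem_nhds_iff.1 (((hU _ _).sdiff).isClosed.isOpen_compl.mem_nhds hu₀)
  refine ⟨min r 1, by positivity, fun v hv hne => ?_⟩
  by_contra! hlt
  have hlt1 := abs_sub_lt_iff.1 (hlt.trans_le (min_le_right r 1))
  refine hball ?_ ⟨⟨hv, ⟨by linarith, by linarith⟩⟩, hne⟩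
  rw [Metric.mem_ball, Real.dist_eq]
  exact hlt.trans_le (min_le_left r 1)

lemma coeff_eq_zero_of_fourierInv_eq_zero {U : Set ℝ} (hU : ∀ a b, (U ∩ Icc a b).Finite)
    {b : ℝ → ℂ} {p : ℂ → ℂ} (hp : Continuous p) {M : ℝ} (hM : ∀ w : ℂ, 0 ≤ w.im → ‖p w‖ ≤ M)
    (hrep : ∀ w : ℂ, 0 < w.im →
      Summable (fun u : U => ‖b u * cexp (-(2 * π * I * (u : ℝ) * w))‖) ∧
      p w = ∑' u : U, b u * cexp (-(2 * π * I * (u : ℝ) * w)))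
    {u₀ : ℝ} (hu₀ : u₀ ∈ U)
    (hvanish : ∀ᶠ ε in 𝓝[>] 0, 𝓕⁻ (fun x : ℝ => p x * sincSq ε x) u₀ = 0) : b u₀ = 0 := by
  have : Countable U := (countable_of_finite_inter_Icc hU).to_subtype
  obtain ⟨r, hr, hiso⟩ := exists_pos_le_abs_sub hU u₀
  obtain ⟨ε, hvan, hε, hεr⟩ := (hvanish.and (Ioo_mem_nhdsGT hr)).exists
  set c : ℝ → U → ℂ := fun δ u => b u * cexp (-(2 * π * I * (u : ℝ) * (δ * I)))
  have hslice : ∀ δ : ℝ, 0 < δ →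
      𝓕⁻ (fun x : ℝ => p (x + δ * I) * sincSq ε x) u₀ = c δ ⟨u₀, hu₀⟩ * (ε : ℂ)⁻¹ := by
    intro δ hδ
    have hp_eq : ∀ x : ℝ, p (x + δ * I) = ∑' u, c δ u * cexp (-(2 * π * I * (u : ℝ) * x)) := by
      intro x
      rw [(hrep _ (by simpa using hδ)).2]
      congr 1 with u
      simp only [c, mul_assoc, ← Complex.exp_add]
      ring_nf
    simp_rw [hp_eq]
    rw [fourierInv_tsum_mul (hrep _ (by simpa using hδ)).1 _ (integrable_sincSq hε.ne'),
      fourierInv_sincSq hε, tsum_eq_single ⟨u₀, hu₀⟩, sub_self, tent_zero hε]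
    intro u hu
    have hgap : ε ≤ |(u₀ : ℝ) - u| :=
      abs_sub_comm (u : ℝ) u₀ ▸ hεr.le.trans (hiso u u.2 fun h => hu (Subtype.ext h))
    rw [tent_eq_zero hgap, mul_zero]
  have hlim : Tendsto (fun δ : ℝ => c δ ⟨u₀, hu₀⟩ * (ε : ℂ)⁻¹) (𝓝[>] 0)
      (𝓝 (b u₀ * (ε : ℂ)⁻¹)) := by
    have hcont : Continuous fun δ : ℝ => c δ ⟨u₀, hu₀⟩ * (ε : ℂ)⁻¹ := by fun_prop
    simpa [c] using (hcont.tendsto 0).mono_left nhdsWithin_le_nhds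
  have hlim' := tendsto_fourierInv_comp_add_mul_I hp hM (integrable_sincSq hε.ne') u₀
  rw [hvan] at hlim'
  have := tendsto_nhds_unique (l := 𝓝[>] (0 : ℝ))
    (hlim'.congr' (eventually_nhdsWithin_of_forall hslice)) hlim
  simpa [hε.ne'] using this.symm

lemma Differentiable.eq_of_eqOn_upperHalfPlane {f g : ℂ → ℂ} (hf : Differentiable ℂ f)
    (hg : Differentiable ℂ g) (h : ∀ w : ℂ, 0 < w.im → f w = g w) : f = g :=
  AnalyticOnNhd.eq_of_eventuallyEq (analyticOnNhd_univ_iff_differentiable.2 hf)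
    (analyticOnNhd_univ_iff_differentiable.2 hg) (z₀ := I)
    (eventually_of_mem ((isOpen_lt continuous_const continuous_im).mem_nhds (by simp)) h)

lemma exists_expPoly_eq_tsum {U F : Set ℝ} (hU0 : U ⊆ Iic 0) (hF : F.Finite) {b : ℝ → ℂ}
    (hb : ∀ u ∈ U, u ∉ F → b u = 0) :
    ∃ n : ℕ, ∃ b' : Fin n → ℂ, ∃ γ : Fin n → ℝ, (∀ k, 0 ≤ γ k) ∧ ∀ w : ℂ,
      ∑' u : U, b u * cexp (-(2 * π * I * (u : ℝ) * w)) = ∑ k, b' k * cexp (I * γ k * w) := by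
  set s : Finset U := (hF.preimage Subtype.val_injective.injOn).toFinset
  set e := s.equivFin
  refine ⟨s.card, fun k => b (e.symm k), fun k => -(2 * π * (e.symm k : ℝ)), fun k => ?_,
    fun w => ?_⟩
  · exact neg_nonneg.2 (mul_nonpos_of_nonneg_of_nonpos (by positivity) (hU0 (e.symm k : U).2))
  · rw [tsum_eq_sum (s := s) fun u hu => by
      rw [hb u u.2 (by simpa [s] using hu), zero_mul], ← Finset.sum_coe_sort s,
      ← e.symm.sum_comp]
    congr 1 with k
    push_cast
    ring_nf

theorem stmt16_general (U : Set ℝ) (hU0 : U ⊆ Set.Iic 0)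
    (hUfin : ∀ a b : ℝ, (U ∩ Set.Icc a b).Finite)
    (b : ℝ → ℂ) (p : ℂ → ℂ) (hp : Differentiable ℂ p)
    (σ : ℝ)
    (hbdd : ∃ M : ℝ, ∀ w : ℂ, 0 ≤ w.im → ‖p w‖ ≤ M)
    (hrep : ∀ w : ℂ, 0 < w.im →
      Summable (fun u : U =>
        ‖b u * Complex.exp (-(2 * π * Complex.I * (u : ℝ) * w))‖) ∧
      p w = ∑' u : U, b u * Complex.exp (-(2 * π * Complex.I * (u : ℝ) * w)))
    (hvanish : ∃ ε₀ > (0:ℝ), ∀ ε : ℝ, 0 < ε → ε < ε₀ →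
      ∀ t : ℝ, t ∉ Set.Ioo (-σ - ε) ε →
        (∫ x : ℝ, Complex.exp (2 * π * Complex.I * t * x) *
          (p x * (Complex.sin (π * ε * x) / (π * ε * x)) ^ 2)) = 0) :
    (∀ u ∈ U, u < -σ → b u = 0) ∧
    ∃ n : ℕ, ∃ b' : Fin n → ℂ, ∃ γ : Fin n → ℝ,
      (∀ k, 0 ≤ γ k) ∧
      ∀ w : ℂ, p w = ∑ k, b' k * Complex.exp (Complex.I * γ k * w) := by
  obtain ⟨ε₀, hε₀, hvan⟩ := hvanish
  obtain ⟨M, hM⟩ := hbdd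
  have hcoeff : ∀ u ∈ U, u < -σ → b u = 0 := by
    intro u hu huσ
    refine coeff_eq_zero_of_fourierInv_eq_zero hUfin hp.continuous hM hrep hu ?_
    filter_upwards [Ioo_mem_nhdsGT (lt_min hε₀ (sub_pos.2 huσ))] with ε ⟨hε, hεlt⟩
    rw [fourierInv_eq_integral]
    refine hvan ε hε (hεlt.trans_le (min_le_left _ _)) u fun hmem => ?_
    linarith [hmem.1, hεlt.trans_le (min_le_right ε₀ (-σ - u))]
  refine ⟨hcoeff, ?_⟩
  obtain ⟨n, b', γ, hγ, hsum⟩ := exists_expPoly_eq_tsum hU0 (hUfin (-σ) 0) (b := b)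
    fun u hu hnot => hcoeff u hu (by
      by_contra! h
      exact hnot ⟨hu, h, hU0 hu⟩)
  refine ⟨n, b', γ, hγ, congrFun (hp.eq_of_eqOn_upperHalfPlane (by fun_prop) fun w hw => ?_)⟩
  rw [(hrep w hw).2, hsum]

/-- if an entire function `p` of exponential type `σ`, bounded
on the upper half-plane, has an absolutely convergent Dirichlet expansion
`p(w) = ∑_{u∈U} b_u e^{-2πiuw}` `(Im w > 0)` over a locally finite
`U ⊆ (-∞,0]`, and the inverse Fourier transform of
`p_ε(w)=p(w)(sin(πεw)/(πεw))²` vanishes outside `(-σ-ε, ε)` for all small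
`ε > 0`, then `b_u = 0` for `u < -σ` and `p` is an exponential polynomial with
finitely many nonnegative real frequencies. -/
theorem stmt16 (U : Set ℝ) (hU0 : U ⊆ Set.Iic 0)
    (hUfin : ∀ a b : ℝ, (U ∩ Set.Icc a b).Finite)
    (b : ℝ → ℂ) (p : ℂ → ℂ) (hp : Differentiable ℂ p)
    (σ : ℝ) (hσ : 0 < σ)
    (htype : ∃ A > (0:ℝ), ∀ w : ℂ, ‖p w‖ ≤ A * Real.exp (σ * ‖w‖))
    (hbdd : ∃ M : ℝ, ∀ w : ℂ, 0 ≤ w.im → ‖p w‖ ≤ M)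
    (hrep : ∀ w : ℂ, 0 < w.im →
      Summable (fun u : U =>
        ‖b u * Complex.exp (-(2 * π * Complex.I * (u : ℝ) * w))‖) ∧
      p w = ∑' u : U, b u * Complex.exp (-(2 * π * Complex.I * (u : ℝ) * w)))
    (hvanish : ∃ ε₀ > (0:ℝ), ∀ ε : ℝ, 0 < ε → ε < ε₀ →
      ∀ t : ℝ, t ∉ Set.Ioo (-σ - ε) ε →
        (∫ x : ℝ, Complex.exp (2 * π * Complex.I * t * x) *
          (p x * (Complex.sin (π * ε * x) / (π * ε * x)) ^ 2)) = 0) :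
    (∀ u ∈ U, u < -σ → b u = 0) ∧
    ∃ n : ℕ, ∃ b' : Fin n → ℂ, ∃ γ : Fin n → ℝ,
      (∀ k, 0 ≤ γ k) ∧
      ∀ w : ℂ, p w = ∑ k, b' k * Complex.exp (Complex.I * γ k * w) :=
  stmt16_general U hU0 hUfin b p hp σ hbdd hrep hvanish
end
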